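/- arXiv:2310.10392 — 2 statements merged into one kernel-verified Lean document; each statement's English description precedes it below -/
import Mathlib

section
/- With y(t) = z(t) + ∫_{t−τ}^{t} e^{(t−s−τ)Â₀} ∑_{i=1}^m B̂_i ξ_i(s) ds and Â₀ nilpotent of index 2 (Â₀² = 0), the function y satisfies the delay-free ODE ẏ(t) = Â₀ y(t) + ∑_{i=1}^m B̂_{i0} ξ_i(t), where B̂_{i0} = e^{−τÂ₀} B̂_i = (I − τÂ₀) B̂_i. -/
/-!
For every matrix `A`, the kernel factors as `e^{(t-s-τ)A} = e^{(t-τ)A} e^{-sA}`, so the integral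
term of `y` is `e^{(t-τ)A}` applied to the sliding-window integral of `s ↦ e^{-sA} v(s)`, where
`v = ∑ᵢ Bᵢ ξᵢ`. The product rule and the fundamental theorem of calculus give its derivative
`A (∫ …) + e^{-τA} v(t) - v(t-τ)`, and adding `ż = A z + v(t-τ)` cancels the delayed input.
Since `A² = 0`, the exponential series stops after its linear term: `e^{-τA} = 1 - τA`.
-/

open Matrix NormedSpace

theorem NormedSpace.exp_eq_one_add_of_sq_eq_zero {𝔸 : Type*} [Ring 𝔸] [Algebra ℚ 𝔸]
    [TopologicalSpace 𝔸] [IsTopologicalRing 𝔸] [T2Space 𝔸] {x : 𝔸} (hx : x ^ 2 = 0) :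
    exp x = 1 + x := by
  have hvanish : ∀ k ∉ Finset.range 2, ((k.factorial : ℚ)⁻¹) • x ^ k = 0 := fun k hk => by
    rw [pow_eq_zero_of_le (by simp at hk; omega) hx, smul_zero]
  simp [exp_eq_tsum_rat, tsum_eq_sum hvanish, Finset.sum_range_succ]

theorem Matrix.exp_add_smul {ι : Type*} [Fintype ι] [DecidableEq ι] (A : Matrix ι ι ℝ)
    (a b : ℝ) : exp ((a + b) • A) = exp (a • A) * exp (b • A) := by
  rw [add_smul]
  exact Matrix.exp_add_of_commute _ _ (((Commute.refl A).smul_left a).smul_right b)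

theorem Matrix.mulVec_intervalIntegral {m n : Type*} [Fintype m] [Fintype n]
    (M : Matrix m n ℝ) {f : ℝ → n → ℝ} {a b : ℝ}
    (hf : IntervalIntegrable f MeasureTheory.volume a b) :
    M *ᵥ ∫ s in a..b, f s = ∫ s in a..b, M *ᵥ f s :=
  ((mulVecBilin ℝ ℝ M).toContinuousLinearMap.intervalIntegral_comp_comm hf).symm

theorem Continuous.hasDerivAt_integral_sub_const_self {E : Type*} [NormedAddCommGroup E]
    [NormedSpace ℝ E] [CompleteSpace E] {f : ℝ → E} (hf : Continuous f) (τ t : ℝ) :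
    HasDerivAt (fun u => ∫ s in (u - τ)..u, f s) (f t - f (t - τ)) t := by
  have hprimitive := fun a => (hf.integral_hasStrictDerivAt 0 a).hasDerivAt
  have hwindow : (fun u => ∫ s in (u - τ)..u, f s)
      = fun u => (∫ s in 0..u, f s) - ∫ s in 0..(u - τ), f s := by
    funext u
    rw [intervalIntegral.integral_interval_sub_left (hf.intervalIntegrable _ _)
      (hf.intervalIntegrable _ _)]
  rw [hwindow]
  exact (hprimitive t).sub (by simpa using (hprimitive (t - τ)).comp_sub_const t τ)

section MatrixCalculus

/- Matrices carry no global norm; to differentiate matrix-valued functions we use the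
`ℓ∞` operator norm, whose topology is the product topology, so `exp` is unchanged. -/
attribute [local instance] Matrix.linftyOpNormedAddCommGroup Matrix.linftyOpNormedSpace
  Matrix.linftyOpNormedRing Matrix.linftyOpNormedAlgebra

theorem HasDerivAt.matrix_mulVec {m n : Type*} [Fintype m] [Fintype n]
    {M : ℝ → Matrix m n ℝ} {x : ℝ → n → ℝ} {M' : Matrix m n ℝ} {x' : n → ℝ} {t : ℝ}
    (hM : HasDerivAt M M' t) (hx : HasDerivAt x x' t) :
    HasDerivAt (fun u => M u *ᵥ x u) (M t *ᵥ x' + M' *ᵥ x t) t :=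
  ContinuousLinearMap.hasDerivAt_of_bilinear
    (B := (mulVecBilin ℝ ℝ : Matrix m n ℝ →ₗ[ℝ] (n → ℝ) →ₗ[ℝ] m → ℝ).toContinuousBilinearMap)
    (fun _ => hM) (fun _ => hx)

theorem hasDerivAt_integral_exp_smul_mulVec {ι : Type*} [Fintype ι] [DecidableEq ι]
    (A : Matrix ι ι ℝ) (τ : ℝ) {v : ℝ → ι → ℝ} (hv : Continuous v) (t : ℝ) :
    HasDerivAt (fun u => ∫ s in (u - τ)..u, exp ((u - s - τ) • A) *ᵥ v s)
      (A *ᵥ (∫ s in (t - τ)..t, exp ((t - s - τ) • A) *ᵥ v s)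
        + exp ((-τ) • A) *ᵥ v t - v (t - τ)) t := by
  have hexp : ∀ c : ℝ, HasDerivAt (fun u : ℝ => exp (u • A)) (A * exp (c • A)) c :=
    hasDerivAt_exp_smul_const' A
  have hg : Continuous fun s : ℝ => exp ((-s) • A) *ᵥ v s :=
    ((continuous_iff_continuousAt.2 fun c => (hexp c).continuousAt).comp
      continuous_neg).matrix_mulVec hv
  have hfactor : ∀ u, ∫ s in (u - τ)..u, exp ((u - s - τ) • A) *ᵥ v s
      = exp ((u - τ) • A) *ᵥ ∫ s in (u - τ)..u, exp ((-s) • A) *ᵥ v s := by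
    intro u
    rw [mulVec_intervalIntegral _ (hg.intervalIntegrable _ _)]
    refine intervalIntegral.integral_congr fun s _ => ?_
    rw [mulVec_mulVec, ← Matrix.exp_add_smul]
    ring_nf
  have hderiv := ((hexp (t - τ)).comp_sub_const t τ).matrix_mulVec
    (hg.hasDerivAt_integral_sub_const_self τ t)
  simp only [hfactor]
  convert hderiv using 1
  have hshift : exp ((t - τ) • A) * exp ((-t) • A) = exp ((-τ) • A) := by
    rw [← Matrix.exp_add_smul]; ring_nf
  have hcancel : exp ((t - τ) • A) * exp ((-(t - τ)) • A) = 1 := by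
    rw [← Matrix.exp_add_smul]; simp
  simp only [mulVec_sub, mulVec_mulVec, hshift, hcancel, one_mulVec]
  abel

end MatrixCalculus

theorem delay_free_ode_general (n p m : ℕ) (τ : ℝ)
    (A : Matrix (Fin n) (Fin n) ℝ) (hA : A ^ 2 = 0)
    (B : Fin m → Matrix (Fin n) (Fin p) ℝ)
    (ξ : Fin m → ℝ → (Fin p → ℝ)) (hξ : ∀ i, Continuous (ξ i))
    (z : ℝ → (Fin n → ℝ))
    (hz : ∀ t : ℝ, HasDerivAt z (A *ᵥ z t + ∑ i, B i *ᵥ ξ i (t - τ)) t)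
    (y : ℝ → (Fin n → ℝ))
    (hy : ∀ t : ℝ, y t = z t + ∫ s in (t - τ)..t,
        NormedSpace.exp ((t - s - τ) • A) *ᵥ (∑ i, B i *ᵥ ξ i s)) :
    (∀ i, NormedSpace.exp ((-τ) • A) * B i = (1 - τ • A) * B i) ∧
    ∀ t : ℝ, HasDerivAt y
      (A *ᵥ y t + ∑ i, (NormedSpace.exp ((-τ) • A) * B i) *ᵥ ξ i t) t := by
  have hexp : exp ((-τ) • A) = 1 - τ • A := by
    rw [exp_eq_one_add_of_sq_eq_zero (by rw [smul_pow, hA, smul_zero]), neg_smul,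
      sub_eq_add_neg]
  refine ⟨fun i => by rw [hexp], fun t => ?_⟩
  have hv : Continuous fun s => ∑ i, B i *ᵥ ξ i s :=
    continuous_finsetSum _ fun i _ => continuous_const.matrix_mulVec (hξ i)
  have hderiv := (hz t).add (hasDerivAt_integral_exp_smul_mulVec A τ hv t)
  rw [funext hy]
  refine hderiv.congr_deriv ?_
  simp only [mulVec_add, ← mulVec_mulVec, ← mulVec_sum]
  abel

/-- With `y(t) = z(t) + ∫_{t−τ}^t e^{(t−s−τ)Â₀} ∑ B̂ᵢ ξᵢ(s) ds` and `Â₀² = 0`, the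
function `y` satisfies the delay-free ODE `ẏ = Â₀ y + ∑ B̂ᵢ₀ ξᵢ(t)` where
`B̂ᵢ₀ = e^{−τÂ₀} B̂ᵢ = (I − τÂ₀) B̂ᵢ`. -/
theorem delay_free_ode (n p m : ℕ) (τ : ℝ) (hτ : 0 < τ)
    (A : Matrix (Fin n) (Fin n) ℝ) (hA : A ^ 2 = 0)
    (B : Fin m → Matrix (Fin n) (Fin p) ℝ)
    (ξ : Fin m → ℝ → (Fin p → ℝ)) (hξ : ∀ i, Continuous (ξ i))
    (z : ℝ → (Fin n → ℝ))
    (hz : ∀ t : ℝ, HasDerivAt z (A *ᵥ z t + ∑ i, B i *ᵥ ξ i (t - τ)) t)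
    (y : ℝ → (Fin n → ℝ))
    (hy : ∀ t : ℝ, y t = z t + ∫ s in (t - τ)..t,
        NormedSpace.exp ((t - s - τ) • A) *ᵥ (∑ i, B i *ᵥ ξ i s)) :
    (∀ i, NormedSpace.exp ((-τ) • A) * B i = (1 - τ • A) * B i) ∧
    ∀ t : ℝ, HasDerivAt y
      (A *ᵥ y t + ∑ i, (NormedSpace.exp ((-τ) • A) * B i) *ᵥ ξ i t) t :=
  delay_free_ode_general n p m τ A hA B ξ hξ z hz y hy
end

section
/- Let M be the 2m(m+1) × 2m(m+1) real matrix defined blockwise as M = [[−Â, S₁, …, S_m],[Q₁, Â^⊤, 0, …],[⋮, 0, ⋱],[Q_m, 0, …, Â^⊤]] with Â = [[0,1],[0,0]] ⊗ I_m, S_i = [[0,0],[0,1]] ⊗ (1/r_i) b_i b_i^⊤, and Q_i = [[1,τ],[τ,τ²+1]] ⊗ W_i, where W_i = diag(0,…,μ_i,…,0) (entry μ_i > 0 in position i) and b_i the i-th standard basis vector. Then the characteristic polynomial of M equals λ^{2m(m−1)} ∏_{i=1}^m (λ⁴ − (μ_i/r_i)(τ²+1)λ² + μ_i/r_i). -/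
open Matrix Kronecker Polynomial

/-- `Â = [[0,1],[0,0]] ⊗ I_m`. -/
noncomputable def AhatM (m : ℕ) : Matrix (Fin 2 × Fin m) (Fin 2 × Fin m) ℝ :=
  !![(0:ℝ),1;0,0] ⊗ₖ (1 : Matrix (Fin m) (Fin m) ℝ)

/-- `S_i = [[0,0],[0,1]] ⊗ (1/r_i) b_i b_iᵀ`. -/
noncomputable def SM (m : ℕ) (r : Fin m → ℝ) (i : Fin m) :
    Matrix (Fin 2 × Fin m) (Fin 2 × Fin m) ℝ :=
  !![(0:ℝ),0;0,1] ⊗ₖ ((1 / r i) • Matrix.single i i (1:ℝ))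

/-- `Q_i = [[1,τ],[τ,τ²+1]] ⊗ diag(0,…,μ_i,…,0)`. -/
noncomputable def QM (m : ℕ) (μ : Fin m → ℝ) (τ : ℝ) (i : Fin m) :
    Matrix (Fin 2 × Fin m) (Fin 2 × Fin m) ℝ :=
  !![(1:ℝ), τ; τ, τ^2+1] ⊗ₖ Matrix.diagonal (fun j => if j = i then μ i else 0)

/-- The TPBVP block matrix `M = [[−Â, S₁, …, S_m],[Q₁, Âᵀ, 0, …],…,[Q_m, 0, …, Âᵀ]]`,
indexed with `Option (Fin m)` for the `m+1` block rows/columns (`none` is the first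
block), each block of size `2m`. -/
noncomputable def MM (m : ℕ) (r μ : Fin m → ℝ) (τ : ℝ) :
    Matrix (Option (Fin m) × (Fin 2 × Fin m)) (Option (Fin m) × (Fin 2 × Fin m)) ℝ :=
  fun p q =>
    match p.1, q.1 with
    | none, none => (-(AhatM m)) p.2 q.2
    | none, some j => SM m r j p.2 q.2
    | some i, none => QM m μ τ i p.2 q.2
    | some i, some j => if i = j then (AhatM m)ᵀ p.2 q.2 else 0

/-!
Write a coordinate of `M` as `(k, (a, j))`: block `k ∈ {none} ∪ Fin m`, position `a ∈ Fin 2`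
and mode `j ∈ Fin m`. Every block of `M` is a `2 × 2` matrix tensored with a matrix that is
diagonal in the mode, and `S_i`, `Q_i` only see mode `i`. Hence a coordinate `(some i, (a, j))`
with `j ≠ i` only interacts with itself through the nilpotent block `Âᵀ`, giving a factor `λ²`
for each of the `m(m-1)` pairs `(i, j)`, while for each mode `j` the four coordinates
`(none, (a, j))`, `(some j, (a, j))` span an invariant `4 × 4` block (`M` itself for `m = 1`),
whose characteristic polynomial is `λ⁴ - (μⱼ/rⱼ)(τ²+1)λ² + μⱼ/rⱼ`.
-/

theorem Matrix.charpoly_blockDiagonal {o n R : Type*} [Fintype o] [DecidableEq o] [Fintype n]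
    [DecidableEq n] [CommRing R] (f : o → Matrix n n R) :
    (blockDiagonal f).charpoly = ∏ k, (f k).charpoly := by
  have : charmatrix (blockDiagonal f) = blockDiagonal fun k => charmatrix (f k) := by
    ext ⟨i, k⟩ ⟨j, k'⟩
    by_cases hk : k = k' <;>
      simp [charmatrix_apply, blockDiagonal_apply, diagonal_apply, Prod.ext_iff, hk]
  rw [charpoly, this, det_blockDiagonal]
  rfl

theorem Fintype.card_subtype_snd_ne_fst (α : Type*) [Fintype α] [DecidableEq α] :
    Fintype.card {p : α × α // p.2 ≠ p.1} = Fintype.card α * (Fintype.card α - 1) := by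
  have diag : {p : α × α // p.2 = p.1} ≃ α :=
    ⟨fun p => p.1.1, fun i => ⟨(i, i), rfl⟩, by rintro ⟨⟨i, j⟩, h⟩; cases h; rfl, fun _ => rfl⟩
  rw [Fintype.card_subtype_compl, Fintype.card_prod, Fintype.card_congr diag, Nat.mul_sub_one]

noncomputable def modeMatrix (r μ τ : ℝ) : Matrix (Fin 2 ⊕ Fin 2) (Fin 2 ⊕ Fin 2) ℝ :=
  fromBlocks (-!![0, 1; 0, 0]) ((1 / r) • !![0, 0; 0, 1]) (μ • !![1, τ; τ, τ ^ 2 + 1])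
    !![0, 1; 0, 0]ᵀ

theorem reindex_modeMatrix (r μ τ : ℝ) :
    reindex finSumFinEquiv finSumFinEquiv (modeMatrix r μ τ) =
      !![0, -1, 0, 0; 0, 0, 0, 1 / r; μ, μ * τ, 0, 0; μ * τ, μ * (τ ^ 2 + 1), 1, 0] := by
  ext i j
  fin_cases i <;> fin_cases j <;> simp [modeMatrix, finSumFinEquiv, Fin.addCases]

theorem charpoly_modeMatrix (r μ τ : ℝ) :
    (modeMatrix r μ τ).charpoly = X ^ 4 - C (μ / r * (τ ^ 2 + 1)) * X ^ 2 + C (μ / r) := by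
  rw [← charpoly_reindex finSumFinEquiv, reindex_modeMatrix]
  simp [charpoly, charmatrix, det_succ_row_zero, Fin.sum_univ_succ, Fin.succAbove, diagonal,
    div_eq_mul_inv]
  ring

abbrev OffDiag (m : ℕ) := {p : Fin m × Fin m // p.2 ≠ p.1}

def indexEquivMM (m : ℕ) :
    Option (Fin m) × (Fin 2 × Fin m) ≃ (Fin 2 × OffDiag m) ⊕ ((Fin 2 ⊕ Fin 2) × Fin m) where
  toFun
    | (none, (a, j)) => .inr (.inl a, j)
    | (some i, (a, j)) => if h : j = i then .inr (.inr a, i) else .inl (a, ⟨(i, j), h⟩)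
  invFun
    | .inl (a, ⟨(i, j), _⟩) => (some i, (a, j))
    | .inr (.inl a, j) => (none, (a, j))
    | .inr (.inr a, j) => (some j, (a, j))
  left_inv := by
    rintro ⟨_ | i, a, j⟩
    · rfl
    · by_cases h : j = i
      · subst h; simp
      · simp [h]
  right_inv := by
    rintro (⟨a, ⟨⟨i, j⟩, h⟩⟩ | ⟨a | a, j⟩) <;> simp [*]

theorem reindex_MM (m : ℕ) (r μ : Fin m → ℝ) (τ : ℝ) :
    reindex (indexEquivMM m) (indexEquivMM m) (MM m r μ τ) =
      fromBlocks (blockDiagonal fun _ => !![0, 1; 0, 0]ᵀ) 0 0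
        (blockDiagonal fun j => modeMatrix (r j) (μ j) τ) := by
  ext (⟨a, ⟨⟨i, j⟩, hij⟩⟩ | ⟨a | a, j⟩) (⟨b, ⟨⟨i', j'⟩, hij'⟩⟩ | ⟨b | b, j'⟩)
  all_goals simp [indexEquivMM, MM, AhatM, SM, QM, kroneckerMap_apply, blockDiagonal_apply,
    one_apply, diagonal_apply, single_apply, modeMatrix]
  all_goals fin_cases a <;> fin_cases b <;> simp <;> grind

theorem MM_charpoly_general (m : ℕ) (r μ : Fin m → ℝ) (τ : ℝ) :
    (MM m r μ τ).charpoly =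
      X ^ (2 * m * (m - 1)) *
        ∏ i : Fin m,
          (X ^ 4 - C (μ i / r i * (τ ^ 2 + 1)) * X ^ 2 + C (μ i / r i)) := by
  have charpoly_nilpotent : (!![0, 1; 0, 0]ᵀ : Matrix (Fin 2) (Fin 2) ℝ).charpoly = X ^ 2 := by
    simp [charpoly_fin_two, trace_fin_two, det_fin_two]
  have card_offDiag : Fintype.card (OffDiag m) = m * (m - 1) := by
    simpa using Fintype.card_subtype_snd_ne_fst (Fin m)
  rw [← charpoly_reindex (indexEquivMM m), reindex_MM, charpoly_fromBlocks_zero₁₂,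
    charpoly_blockDiagonal, charpoly_blockDiagonal]
  simp only [charpoly_nilpotent, charpoly_modeMatrix, Finset.prod_const, Finset.card_univ,
    card_offDiag, ← pow_mul, ← mul_assoc]

/-- The characteristic polynomial of `M` is
`λ^{2m(m−1)} ∏ᵢ (λ⁴ − (μᵢ/rᵢ)(τ²+1)λ² + μᵢ/rᵢ)`. -/
theorem MM_charpoly (m : ℕ) (r μ : Fin m → ℝ) (τ : ℝ)
    (hr : ∀ i, 0 < r i) (hμ : ∀ i, 0 < μ i) :
    (MM m r μ τ).charpoly =
      X ^ (2 * m * (m - 1)) *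
        ∏ i : Fin m,
          (X ^ 4 - C (μ i / r i * (τ ^ 2 + 1)) * X ^ 2 + C (μ i / r i)) :=
  MM_charpoly_general m r μ τ
end
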